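/- arXiv:2511.01319 — 2 statements merged into one kernel-verified Lean document; each statement's English description precedes it below -/
import Mathlib

section
/- Let G be a connected graph of order m, let k ≥ 2, and let A be the transfer matrix of G with respect to a bijection φ. Then for all i,j ∈ {1,…,2^m−1}, the (i,j)-entry of A^{k−1} equals the number of sets C ∈ C_L(G×P_k) that intersect every column of G×P_k and satisfy C∩I_1 = {(p,v_1) : p∈φ(i)} and C∩I_k = {(q,v_k) : q∈φ(j)}. Consequently 1^T·A^{k−1}·1 equals the number of sets in C_L(G×P_k) that intersect every column of G×P_k. -/
open SimpleGraph Finset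
open scoped Classical

/-- A connected set of a graph: a nonempty vertex subset inducing a connected subgraph. -/
def IsConnSet {V : Type*} (G : SimpleGraph V) (C : Finset V) : Prop :=
  C.Nonempty ∧ (G.induce (C : Set V)).Connected

/-- `N(G)`: the number of connected sets of `G`. -/
noncomputable def numConnSets {V : Type*} (G : SimpleGraph V) : ℕ :=
  {C : Finset V | IsConnSet G C}.ncard

/-- Membership in `C_L(G×P_n)`: a connected set `C` of `G×P_n` such that for any two
consecutive columns `X, Y` with `C∩X ≠ ∅` and `C∩Y ≠ ∅`, the set `C∩(X∪Y)` is a connected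
set of `G×P_n`. -/
def IsCLSet {V : Type*} (G : SimpleGraph V) (n : ℕ) (C : Finset (V × Fin n)) : Prop :=
  IsConnSet (G □ pathGraph n) C ∧
  ∀ j j' : Fin n, (pathGraph n).Adj j j' →
    (C.filter (fun p => p.2 = j)).Nonempty →
    (C.filter (fun p => p.2 = j')).Nonempty →
    IsConnSet (G □ pathGraph n) (C.filter (fun p => p.2 = j ∨ p.2 = j'))

/-- `N_L(G×P_n) = |C_L(G×P_n)|`. -/
noncomputable def NL {V : Type*} (G : SimpleGraph V) (n : ℕ) : ℕ :=
  {C : Finset (V × Fin n) | IsCLSet G n C}.ncard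

/-!
A set `C` of `G × P_k` meeting every column is the same thing as the sequence of its columns
`S_1, …, S_k`, nonempty vertex sets of `G`, i.e. a sequence of indices `φ⁻¹ S_l`. Such a `C`
lies in `C_L(G × P_k)` exactly when every two consecutive columns `S_l × {v_l} ∪ S_{l+1} × {v_{l+1}}`
form a connected set: necessity is part of the definition of `C_L`, and conversely these
two-column sets, chained along their common columns, make `C` connected. Since two consecutive columns of
`G × P_k` induce a copy of `G × P_2`, that condition says `a_{φ⁻¹ S_l, φ⁻¹ S_{l+1}} = 1`, so the
sets counted are the walks of length `k - 1` in the 0/1 matrix `A`, which `A^(k-1)` counts.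
-/

section RelChains

variable {ι : Type*} [Fintype ι]

noncomputable def relChains (R : ι → ι → Prop) (n : ℕ) : Finset (Fin (n + 1) → ι) :=
  univ.filter fun f => ∀ l : Fin n, R (f l.castSucc) (f l.succ)

theorem mem_relChains_succ {R : ι → ι → Prop} {n : ℕ} {f : Fin (n + 2) → ι} :
    f ∈ relChains R (n + 1) ↔ R (f 0) (f 1) ∧ Fin.tail f ∈ relChains R n := by
  simp [relChains, Fin.forall_fin_succ, Fin.tail]

variable [DecidableEq ι]

theorem card_relChains_succ (R : ι → ι → Prop) (n : ℕ) (i j : ι) :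
    #{f ∈ relChains R (n + 1) | f 0 = i ∧ f (Fin.last (n + 1)) = j} =
      #{g ∈ relChains R n | R i (g 0) ∧ g (Fin.last n) = j} := by
  refine card_nbij' Fin.tail (fun g => (Fin.cons i g : Fin (n + 2) → ι)) ?_ ?_ ?_ ?_
  · intro f hf
    simp only [coe_filter, Set.mem_ofPred_eq, mem_relChains_succ] at hf ⊢
    obtain ⟨⟨hR, hchain⟩, rfl, rfl⟩ := hf
    exact ⟨hchain, hR, rfl⟩
  · intro g hg
    simp only [coe_filter, Set.mem_ofPred_eq, mem_relChains_succ, Fin.cons_zero, Fin.cons_one,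
      Fin.tail_cons, Fin.cons_last, true_and] at hg ⊢
    exact ⟨⟨hg.2.1, hg.1⟩, hg.2.2⟩
  · intro f hf
    simp only [coe_filter, Set.mem_ofPred_eq] at hf
    rw [← hf.2.1]
    exact Fin.cons_self_tail f
  · intro g _
    exact Fin.tail_cons _ _

theorem pow_apply_eq_card_relChains (R : ι → ι → Prop) (A : Matrix ι ι ℕ)
    (hA : ∀ i j, A i j = if R i j then 1 else 0) (n : ℕ) (i j : ι) :
    (A ^ n) i j = #{f ∈ relChains R n | f 0 = i ∧ f (Fin.last n) = j} := by
  induction n generalizing i with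
  | zero =>
    rw [pow_zero, Matrix.one_apply]
    split_ifs with hij
    · subst hij
      refine (card_eq_one.2 ⟨fun _ => i, ?_⟩).symm
      ext f
      simp [relChains, funext_iff, Fin.forall_fin_one]
    · refine (card_eq_zero.2 (filter_eq_empty_iff.2 ?_)).symm
      rintro f - ⟨rfl, h⟩
      exact hij h
  | succ n ih =>
    have hfiber : #{g ∈ relChains R n | R i (g 0) ∧ g (Fin.last n) = j} =
        ∑ x ∈ univ.filter (R i), #{g ∈ relChains R n | g 0 = x ∧ g (Fin.last n) = j} := by
      rw [card_eq_sum_card_fiberwise (f := fun g => g 0) (t := univ.filter (R i))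
        fun g hg => by simpa using (mem_filter.1 hg).2.1]
      refine sum_congr rfl fun x hx => congrArg card ?_
      rw [filter_filter]
      refine filter_congr fun g _ => ⟨?_, ?_⟩
      · rintro ⟨⟨-, h⟩, rfl⟩
        exact ⟨rfl, h⟩
      · rintro ⟨rfl, h⟩
        exact ⟨⟨(mem_filter.1 hx).2, h⟩, rfl⟩
    rw [pow_succ', Matrix.mul_apply, card_relChains_succ, hfiber]
    simp_rw [ih, hA, ite_mul, one_mul, zero_mul, ← sum_filter]

theorem sum_sum_card_relChains (R : ι → ι → Prop) (n : ℕ) :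
    ∑ i, ∑ j, #{f ∈ relChains R n | f 0 = i ∧ f (Fin.last n) = j} = #(relChains R n) := by
  rw [card_eq_sum_card_fiberwise (f := fun f => (f 0, f (Fin.last n))) (t := univ)
    fun _ _ => mem_univ _, Fintype.sum_prod_type]
  simp only [Prod.ext_iff]

end RelChains

theorem SimpleGraph.induce_biUnion_connected_of_consecutive {V : Type*} {G : SimpleGraph V}
    {U : ℕ → Set V} {n : ℕ} (hne : ∀ l ≤ n + 1, (U l).Nonempty)
    (hconn : ∀ l ≤ n, (G.induce (U l ∪ U (l + 1))).Connected) :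
    (G.induce (⋃ l ≤ n + 1, U l)).Connected := by
  induction n with
  | zero =>
    rw [Set.biUnion_le_succ U 0, show ⋃ l ≤ 0, U l = U 0 by simp]
    exact hconn 0 le_rfl
  | succ n ih =>
    have hsub : U (n + 1) ⊆ ⋃ l ≤ n + 1, U l := fun x hx => Set.mem_iUnion₂.2 ⟨n + 1, le_rfl, hx⟩
    have hsplit : ⋃ l ≤ n + 2, U l = (⋃ l ≤ n + 1, U l) ∪ (U (n + 1) ∪ U (n + 2)) := by
      rw [Set.biUnion_le_succ _ (n + 1), ← Set.union_assoc, Set.union_eq_left.2 hsub]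
    obtain ⟨x, hx⟩ := hne (n + 1) (by omega)
    rw [hsplit]
    exact induce_union_connected
      (ih (fun l hl => hne l (by omega)) fun l hl => hconn l (by omega)).preconnected
      (hconn (n + 1) le_rfl).preconnected ⟨x, hsub hx, Or.inl hx⟩

theorem SimpleGraph.Embedding.isConnSet_map_iff {V W : Type*} {G : SimpleGraph V}
    {H : SimpleGraph W} (e : G ↪g H) (C : Finset V) :
    IsConnSet H (C.map e.toEmbedding) ↔ IsConnSet G C := by
  unfold IsConnSet
  rw [Finset.map_nonempty, Finset.coe_map]
  exact and_congr_right fun _ =>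
    (Iso.connected_iff ⟨Equiv.Set.image e C e.injective, e.map_adj_iff⟩).symm

def boxProdPathGraphShift {V : Type*} (G : SimpleGraph V) {n : ℕ} (l : Fin (n + 1)) :
    (G □ pathGraph 2) ↪g (G □ pathGraph (n + 2)) where
  toFun p := (p.1, ⟨l + p.2, by omega⟩)
  inj' p q h := by
    simp only [Prod.mk.injEq, Fin.mk.injEq, Nat.add_left_cancel_iff] at h
    exact Prod.ext h.1 (Fin.ext h.2)
  map_rel_iff' {p q} := by
    change (G □ pathGraph (n + 2)).Adj (p.1, _) (q.1, _) ↔ _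
    simp only [boxProd_adj, pathGraph_adj, Fin.ext_iff, add_assoc, Nat.add_left_cancel_iff]

theorem isConnSet_image_adjacent_columns {V : Type*} [DecidableEq V] (G : SimpleGraph V) {n : ℕ}
    (l : Fin (n + 1)) (S T : Finset V) :
    IsConnSet (G □ pathGraph (n + 2)) (S.image (·, l.castSucc) ∪ T.image (·, l.succ)) ↔
      IsConnSet (G □ pathGraph 2) (S.image (·, 0) ∪ T.image (·, 1)) := by
  rw [← (boxProdPathGraphShift G l).isConnSet_map_iff, map_eq_image, image_union, image_image,
    image_image]
  rfl

theorem isCLSet_iff_forall_isConnSet_adjacent_columns {V : Type*} (G : SimpleGraph V) {n : ℕ}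
    {C : Finset (V × Fin (n + 2))} (hC : ∀ l, (C.filter fun p => p.2 = l).Nonempty) :
    IsCLSet G (n + 2) C ↔ ∀ l : Fin (n + 1),
      IsConnSet (G □ pathGraph (n + 2)) (C.filter fun p => p.2 = l.castSucc ∨ p.2 = l.succ) := by
  refine ⟨fun h l => h.2 _ _ (by simp [pathGraph_adj]) (hC _) (hC _), fun h => ⟨?_, ?_⟩⟩
  · let U : ℕ → Set (V × Fin (n + 2)) := fun l => {p | p ∈ C ∧ (p.2 : ℕ) = l}
    have hC_eq : (C : Set (V × Fin (n + 2))) = ⋃ l ≤ n + 1, U l := by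
      ext p
      simp only [mem_coe, Set.mem_iUnion, Set.mem_ofPred_eq, U, exists_prop]
      exact ⟨fun hp => ⟨p.2, by omega, hp, rfl⟩, fun ⟨_, _, hp, _⟩ => hp⟩
    refine ⟨(hC 0).mono (filter_subset _ _), ?_⟩
    rw [hC_eq]
    refine SimpleGraph.induce_biUnion_connected_of_consecutive (fun l hl => ?_) fun l hl => ?_
    · obtain ⟨p, hp⟩ := hC ⟨l, by omega⟩
      rw [mem_filter] at hp
      exact ⟨p, hp.1, by rw [hp.2]⟩
    · have hpair : U l ∪ U (l + 1) =
          ↑(C.filter fun p => p.2 = Fin.castSucc ⟨l, by omega⟩ ∨ p.2 = Fin.succ ⟨l, by omega⟩) := by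
        ext p
        simp only [Set.mem_union, Set.mem_ofPred_eq, coe_filter, Fin.ext_iff, Fin.val_castSucc,
          Fin.val_succ, U]
        tauto
      rw [hpair]
      exact (h _).2
  · intro j j' hadj _ _
    rcases pathGraph_adj.1 hadj with hj | hj
    · convert h ⟨j, by omega⟩ using 2
      simp only [Fin.ext_iff, Fin.val_castSucc, Fin.val_succ]
      omega
    · convert h ⟨j', by omega⟩ using 2
      simp only [Fin.ext_iff, Fin.val_castSucc, Fin.val_succ]
      omega

section Columns

variable {V : Type*} [Fintype V] [DecidableEq V] {k : ℕ}

def ofColumns (s : Fin k → Finset V) : Finset (V × Fin k) :=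
  univ.filter fun p => p.1 ∈ s p.2

theorem filter_ofColumns_snd_eq (s : Fin k → Finset V) (l : Fin k) :
    (ofColumns s).filter (fun p => p.2 = l) = (s l).image (·, l) := by
  ext ⟨x, l'⟩
  simp only [ofColumns, filter_filter, mem_filter, mem_univ, true_and, mem_image, Prod.mk.injEq]
  constructor
  · rintro ⟨hx, rfl⟩
    exact ⟨x, hx, rfl, rfl⟩
  · rintro ⟨x, hx, rfl, rfl⟩
    exact ⟨hx, rfl⟩

theorem ncard_setOf_columns_nonempty {ι : Type*} (φ : ι ≃ {S : Finset V // S.Nonempty})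
    (P : Finset (V × Fin k) → Prop) :
    {C | (∀ l, (C.filter fun p => p.2 = l).Nonempty) ∧ P C}.ncard =
      {f : Fin k → ι | P (ofColumns fun l => (φ (f l)).1)}.ncard := by
  have hinj : Function.Injective fun f : Fin k → ι => ofColumns fun l => (φ (f l)).1 := by
    intro f g hfg
    funext l
    refine φ.injective (Subtype.ext (Finset.ext fun x => ?_))
    simpa [ofColumns] using congrArg (fun C => (x, l) ∈ C) hfg
  rw [← Set.ncard_image_of_injective _ hinj]
  congr 1
  ext C
  constructor
  · rintro ⟨hC, hP⟩
    have hne (l : Fin k) : (univ.filter fun x => (x, l) ∈ C).Nonempty := by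
      obtain ⟨p, hp⟩ := hC l
      rw [mem_filter] at hp
      exact ⟨p.1, by simp [← hp.2, hp.1]⟩
    have hC_eq : (ofColumns fun l => (φ (φ.symm ⟨_, hne l⟩)).1) = C := by
      ext p
      simp [ofColumns]
    exact ⟨fun l => φ.symm ⟨_, hne l⟩, by rwa [Set.mem_ofPred_eq, hC_eq], hC_eq⟩
  · rintro ⟨f, hf, rfl⟩
    exact ⟨fun l => by rw [filter_ofColumns_snd_eq]; exact (φ (f l)).2.image _, hf⟩

theorem isCLSet_ofColumns_iff (G : SimpleGraph V) {n : ℕ} {s : Fin (n + 2) → Finset V}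
    (hs : ∀ l, (s l).Nonempty) :
    IsCLSet G (n + 2) (ofColumns s) ↔ ∀ l : Fin (n + 1),
      IsConnSet (G □ pathGraph 2) ((s l.castSucc).image (·, 0) ∪ (s l.succ).image (·, 1)) := by
  rw [isCLSet_iff_forall_isConnSet_adjacent_columns G fun l => by
    rw [filter_ofColumns_snd_eq]; exact (hs l).image _]
  simp only [filter_or, filter_ofColumns_snd_eq, isConnSet_image_adjacent_columns]

end Columns

/-- For a connected graph `G` of order `m`, `k ≥ 2`, and the transfer
matrix `A` of `G` with respect to a bijection `φ`: the `(i,j)`-entry of `A^{k−1}` counts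
the sets in `C_L(G×P_k)` meeting every column with `C∩I_1 = φ(i)×{v_1}` and
`C∩I_k = φ(j)×{v_k}`; consequently `1ᵀ·A^{k−1}·1` counts the sets in `C_L(G×P_k)`
meeting every column. -/
theorem statement4 {m : ℕ} (G : SimpleGraph (Fin m))
    (k : ℕ) (hk : 2 ≤ k)
    (φ : Fin (2 ^ m - 1) ≃ {S : Finset (Fin m) // S.Nonempty})
    (A : Matrix (Fin (2 ^ m - 1)) (Fin (2 ^ m - 1)) ℕ)
    (hA : ∀ i j, A i j =
      if IsConnSet (G □ pathGraph 2)
          ((φ i).1.image (fun p => (p, (0 : Fin 2))) ∪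
            (φ j).1.image (fun q => (q, (1 : Fin 2))))
      then 1 else 0) :
    (∀ i j, (A ^ (k - 1)) i j =
      {C : Finset (Fin m × Fin k) | IsCLSet G k C ∧
        (∀ l : Fin k, (C.filter (fun p => p.2 = l)).Nonempty) ∧
        C.filter (fun p => p.2 = (⟨0, by omega⟩ : Fin k)) =
          (φ i).1.image (fun p => (p, (⟨0, by omega⟩ : Fin k))) ∧
        C.filter (fun p => p.2 = (⟨k - 1, by omega⟩ : Fin k)) =
          (φ j).1.image (fun q => (q, (⟨k - 1, by omega⟩ : Fin k)))}.ncard) ∧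
    (∑ i, ∑ j, (A ^ (k - 1)) i j) =
      {C : Finset (Fin m × Fin k) | IsCLSet G k C ∧
        ∀ l : Fin k, (C.filter (fun p => p.2 = l)).Nonempty}.ncard := by
  obtain ⟨n, rfl⟩ : ∃ n, k = n + 2 := ⟨k - 2, by omega⟩
  let R (i j : Fin (2 ^ m - 1)) : Prop :=
    IsConnSet (G □ pathGraph 2) ((φ i).1.image (·, 0) ∪ (φ j).1.image (·, 1))
  have hchains (f : Fin (n + 2) → Fin (2 ^ m - 1)) :
      IsCLSet G (n + 2) (ofColumns fun l => (φ (f l)).1) ↔ f ∈ relChains R (n + 1) := by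
    rw [isCLSet_ofColumns_iff G fun l => (φ (f l)).2]
    simp [relChains, R]
  have hcolumn (f : Fin (n + 2) → Fin (2 ^ m - 1)) (l i) :
      (ofColumns fun l => (φ (f l)).1).filter (fun p => p.2 = l) = (φ i).1.image (·, l) ↔
        f l = i := by
    rw [filter_ofColumns_snd_eq, (image_injective (Prod.mk_left_injective l)).eq_iff,
      Subtype.coe_inj, φ.injective.eq_iff]
  refine ⟨fun i j => ?_, ?_⟩
  · rw [Set.ext fun C => and_left_comm, ncard_setOf_columns_nonempty φ,
      pow_apply_eq_card_relChains R A hA, ← Set.ncard_coe_finset]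
    congr 1
    ext f
    simp only [Set.mem_ofPred_eq, hchains, hcolumn, coe_filter]
    -- `⟨0, _⟩ = 0` and `⟨n + 2 - 1, _⟩ = Fin.last (n + 1)` hold definitionally
    exact Iff.rfl
  · simp_rw [pow_apply_eq_card_relChains R A hA, sum_sum_card_relChains]
    rw [Set.ext fun C => and_comm, ncard_setOf_columns_nonempty φ, ← Set.ncard_coe_finset]
    congr 1
    ext f
    simp only [hchains, mem_coe]
    exact Iff.rfl
end

section
/- For any positive integer m and any i ∈ {1,…,m}, f_{m,1}^i = 1, and for every n ≥ 2, f_{m,n}^i = |C_{m,n−1}| − Σ_{j=1}^{m−i} C(m−i,j)·f_{m,n−1}^j, where C(a,b) denotes the binomial coefficient. -/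
open SimpleGraph Finset
open scoped Classical

/-- The cycle `C_m` on `Fin m`, labelled as in the paper: `i` is adjacent to `i'` iff
`|i − i'| = 1` or `{i, i'} = {first, last}` (0-indexed: `{0, m−1}`). -/
def cycleRow (m : ℕ) : SimpleGraph (Fin m) :=
  SimpleGraph.fromRel (fun i i' => i'.1 = i.1 + 1 ∨ (i.1 = 0 ∧ i'.1 = m - 1))

/-- `C_{m,n}`: the connected sets of `K_m×P_n` containing at least one vertex of each
column. -/
def Cmn (m n : ℕ) : Set (Finset (Fin m × Fin n)) :=
  {C | IsConnSet ((⊤ : SimpleGraph (Fin m)) □ pathGraph n) C ∧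
       ∀ j : Fin n, (C.filter (fun p => p.2 = j)).Nonempty}

/-- `C'_{m,n}`: the vertex subsets that are connected sets of `K_m×P_n` but not
connected sets of `C_m×P_n` and contain at least one vertex of each column. -/
def Cmn' (m n : ℕ) : Set (Finset (Fin m × Fin n)) :=
  {C | IsConnSet ((⊤ : SimpleGraph (Fin m)) □ pathGraph n) C ∧
       ¬ IsConnSet (cycleRow m □ pathGraph n) C ∧
       ∀ j : Fin n, (C.filter (fun p => p.2 = j)).Nonempty}

/-- `N(K_m×P_n; X)`: the number of `C ∈ C_{m,n}` with `C∩I_j = X∩I_j` for every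
column `I_j` with `X∩I_j ≠ ∅`. -/
noncomputable def Ncount (m n : ℕ) (X : Finset (Fin m × Fin n)) : ℕ :=
  {C | C ∈ Cmn m n ∧ ∀ j : Fin n,
      (X.filter (fun p => p.2 = j)).Nonempty →
      C.filter (fun p => p.2 = j) = X.filter (fun p => p.2 = j)}.ncard

/-- `N'(K_m×P_n; X)`: the number of `C ∈ C'_{m,n}` with `C∩I_j = X∩I_j` for every
column `I_j` with `X∩I_j ≠ ∅`. -/
noncomputable def N' (m n : ℕ) (X : Finset (Fin m × Fin n)) : ℕ :=
  {C | C ∈ Cmn' m n ∧ ∀ j : Fin n,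
      (X.filter (fun p => p.2 = j)).Nonempty →
      C.filter (fun p => p.2 = j) = X.filter (fun p => p.2 = j)}.ncard

/-- `f_{m,n}^i`: the number of sets in `C_{m,n}` whose intersection with the last column
equals the fixed `i`-element set `{v_{1,n},…,v_{i,n}}`. -/
noncomputable def fval (m n : ℕ) (hn : 0 < n) (i : ℕ) : ℕ :=
  {C : Finset (Fin m × Fin n) | C ∈ Cmn m n ∧
    C.filter (fun p => p.2 = (⟨n - 1, by omega⟩ : Fin n)) =
      (Finset.univ.filter (fun q : Fin m => q.1 < i)).image
        (fun q => (q, (⟨n - 1, by omega⟩ : Fin n)))}.ncard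

/-- `R` is (the vertex set of) a connected component of the subgraph of `H` induced by
`S`: `R` is a nonempty subset of `S`, `H[R]` is connected, and there is no edge of `H`
between `R` and `S \ R`. -/
def IsCompOf {W : Type*} (H : SimpleGraph W) (R S : Finset W) : Prop :=
  R ⊆ S ∧ R.Nonempty ∧ (H.induce (R : Set W)).Connected ∧
  ∀ x ∈ R, ∀ y ∈ S, y ∉ R → ¬ H.Adj x y

/-- `k(H[S])`: the number of connected components of the subgraph of `H` induced by `S`. -/
noncomputable def kcomp {W : Type*} (H : SimpleGraph W) (S : Finset W) : ℕ :=
  Nat.card (H.induce (S : Set W)).ConnectedComponent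

/-!
Deleting the last column of a set counted by `f_{m,n+1}^i` leaves a set of `C_{m,n}` whose last
column meets the rows `1, …, i` (contract the deleted column onto a vertex of column `n` to see
that it stays connected); conversely every such set extends uniquely by that column. The other
sets of `C_{m,n}` have a nonempty last column `B` avoiding these rows, and since permuting rows is
an automorphism of `K_m × P_n`, each `B` carries `f_{m,n}^{|B|}` of them.
-/

theorem SimpleGraph.Preconnected.of_surjective_of_adj_or_eq {V W : Type*} {G : SimpleGraph V}
    {H : SimpleGraph W} (hG : G.Preconnected) {f : V → W} (hf : f.Surjective)
    (hadj : ∀ ⦃x y⦄, G.Adj x y → f x = f y ∨ H.Adj (f x) (f y)) : H.Preconnected := by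
  intro u v
  obtain ⟨x, rfl⟩ := hf u
  obtain ⟨y, rfl⟩ := hf v
  rw [reachable_iff_reflTransGen]
  refine ((reachable_iff_reflTransGen x y).1 (hG x y)).lift' f fun a b hab => ?_
  rcases hadj hab with h | h
  · simp only [Function.onFun, h]
    exact .refl
  · exact .single h

section ConnSet

variable {V W : Type*} {G : SimpleGraph V} {H : SimpleGraph W} {s t : Finset V}

theorem IsConnSet.image [DecidableEq W] (hs : IsConnSet G s) (f : V → W)
    (hadj : ∀ x ∈ s, ∀ y ∈ s, G.Adj x y → f x = f y ∨ H.Adj (f x) (f y)) :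
    IsConnSet H (s.image f) := by
  obtain ⟨hne, hconn⟩ := hs
  let g (x : (s : Set V)) : ((s.image f : Finset W) : Set W) := ⟨f x, mem_image_of_mem f x.2⟩
  have hg : g.Surjective := by
    rintro ⟨y, hy⟩
    obtain ⟨x, hx, rfl⟩ := mem_image.1 hy
    exact ⟨⟨x, hx⟩, rfl⟩
  refine ⟨hne.image f, (connected_iff _).2 ⟨hconn.preconnected.of_surjective_of_adj_or_eq hg
    fun x y hxy => ?_, hconn.nonempty.map g⟩⟩
  simpa [g, Subtype.ext_iff] using hadj x x.2 y y.2 hxy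

theorem IsConnSet.union [DecidableEq V] (hs : IsConnSet G s) (ht : IsConnSet G t) {x y : V}
    (hx : x ∈ s) (hy : y ∈ t) (hxy : G.Adj x y) : IsConnSet G (s ∪ t) :=
  ⟨hs.1.mono subset_union_left, by
    rw [coe_union]; exact connected_induce_union hs.2.preconnected ht.2.preconnected hx hy hxy⟩

theorem isConnSet_of_isClique (hne : s.Nonempty) (hs : G.IsClique (s : Set V)) :
    IsConnSet G s := by
  have : Nonempty (s : Set V) := hne.coe_sort
  exact ⟨hne, induce_eq_top.2 hs ▸ connected_top⟩

theorem IsConnSet.exists_adj_boundary (hs : IsConnSet G s) (S : Set V) {x y : V}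
    (hx : x ∈ s) (hxS : x ∈ S) (hy : y ∈ s) (hyS : y ∉ S) :
    ∃ u ∈ s, ∃ v ∈ s, u ∈ S ∧ v ∉ S ∧ G.Adj u v := by
  obtain ⟨p⟩ := hs.2.preconnected ⟨x, hx⟩ ⟨y, hy⟩
  obtain ⟨d, -, hd, hd'⟩ := p.exists_boundary_dart {u | u.1 ∈ S} hxS hyS
  exact ⟨_, d.fst.2, _, d.snd.2, hd, hd', d.adj⟩

end ConnSet

section Rows

variable {α β : Type*} [Fintype α] [DecidableEq α] [DecidableEq β]

def rowsAt (C : Finset (α × β)) (j : β) : Finset α := {a | (a, j) ∈ C}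

variable {C : Finset (α × β)} {j : β}

@[simp]
theorem mem_rowsAt {a : α} : a ∈ rowsAt C j ↔ (a, j) ∈ C := by
  simp [rowsAt]

theorem filter_snd_eq_image_iff {B : Finset α} :
    C.filter (fun p => p.2 = j) = B.image (·, j) ↔ rowsAt C j = B := by
  simp only [Finset.ext_iff, mem_filter, mem_image, mem_rowsAt, Prod.forall, Prod.mk.injEq]
  constructor
  · intro h a
    simpa using h a j
  · rintro h a k
    constructor
    · rintro ⟨ha, rfl⟩
      exact ⟨a, (h a).1 ha, rfl, rfl⟩
    · rintro ⟨a, ha, rfl, rfl⟩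
      exact ⟨(h a).2 ha, rfl⟩

theorem filter_snd_nonempty_iff :
    (C.filter (fun p => p.2 = j)).Nonempty ↔ (rowsAt C j).Nonempty := by
  simp [Finset.Nonempty]

@[simp]
theorem rowsAt_image_pair (B : Finset α) : rowsAt (B.image (·, j)) j = B := by
  ext
  simp

theorem rowsAt_image_prodMap (σ : Equiv.Perm α) :
    rowsAt (C.image (Prod.map σ id)) j = (rowsAt C j).map σ.toEmbedding := by
  ext a
  simp [← Equiv.eq_symm_apply]

end Rows

section Grid

variable {m n : ℕ}

abbrev cliquePath (m n : ℕ) : SimpleGraph (Fin m × Fin n) :=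
  (⊤ : SimpleGraph (Fin m)) □ pathGraph n

theorem cliquePath_adj_castSucc {a b : Fin m} {i j : Fin n} :
    (cliquePath m (n + 1)).Adj (a, i.castSucc) (b, j.castSucc) ↔
      (cliquePath m n).Adj (a, i) (b, j) := by
  simp [boxProd_adj, pathGraph_adj]

theorem cliquePath_adj_last_castSucc {a b : Fin m} {j : Fin (n + 1)} :
    (cliquePath m (n + 2)).Adj (a, Fin.last (n + 1)) (b, j.castSucc) ↔
      a = b ∧ j = Fin.last n := by
  simp [boxProd_adj, pathGraph_adj, Fin.ext_iff]
  omega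

theorem mem_Cmn_iff {C : Finset (Fin m × Fin n)} :
    C ∈ Cmn m n ↔ IsConnSet (cliquePath m n) C ∧ ∀ j, (rowsAt C j).Nonempty := by
  simp only [Cmn, Set.mem_ofPred_eq, filter_snd_nonempty_iff]

theorem isConnSet_image_column {B : Finset (Fin m)} (hB : B.Nonempty) (j : Fin n) :
    IsConnSet (cliquePath m n) (B.image (·, j)) := by
  refine isConnSet_of_isClique (hB.image _) ?_
  rintro _ hp _ hq hpq
  obtain ⟨a, -, rfl⟩ := mem_image.1 (mem_coe.1 hp)
  obtain ⟨b, -, rfl⟩ := mem_image.1 (mem_coe.1 hq)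
  simpa [boxProd_adj] using hpq

noncomputable def lastColumnFiber (m n : ℕ) (B : Finset (Fin m)) :
    Finset (Finset (Fin m × Fin (n + 1))) :=
  {C | C ∈ Cmn m (n + 1) ∧ rowsAt C (Fin.last n) = B}

theorem fval_succ_eq_card (hn : 0 < n + 1) (i : ℕ) :
    fval m (n + 1) hn i = #(lastColumnFiber m n {a | (a : ℕ) < i}) := by
  rw [fval, lastColumnFiber, Set.ncard_eq_toFinset_card', Set.toFinset_ofPred]
  simp_rw [filter_snd_eq_image_iff]
  rfl

theorem lastColumnFiber_empty : lastColumnFiber m n ∅ = ∅ := by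
  ext C
  simp only [lastColumnFiber, mem_filter, mem_univ, true_and, notMem_empty, iff_false,
    mem_Cmn_iff, not_and]
  intro ⟨_, hC⟩ hlast
  simpa [hlast] using hC (Fin.last n)

theorem lastColumnFiber_zero {B : Finset (Fin m)} (hB : B.Nonempty) :
    lastColumnFiber m 0 B = {B.image (·, 0)} := by
  ext C
  simp only [lastColumnFiber, mem_filter, mem_univ, true_and, mem_singleton, mem_Cmn_iff]
  have hcol (D : Finset (Fin m × Fin 1)) : D = (rowsAt D 0).image (·, 0) := by
    ext ⟨a, j⟩
    simp [Fin.fin_one_eq_zero j]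
  constructor
  · rintro ⟨-, hC⟩
    rw [hcol C]
    exact congrArg _ hC
  · rintro rfl
    refine ⟨⟨isConnSet_image_column hB 0, fun j => ?_⟩, rowsAt_image_pair B⟩
    rwa [Fin.fin_one_eq_zero j, rowsAt_image_pair]

theorem image_prodMap_mem_Cmn (σ : Equiv.Perm (Fin m)) {C : Finset (Fin m × Fin n)}
    (hC : C ∈ Cmn m n) : C.image (Prod.map σ id) ∈ Cmn m n := by
  rw [mem_Cmn_iff] at hC ⊢
  refine ⟨hC.1.image _ fun p _ q _ hpq => .inr ?_, fun j => ?_⟩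
  · simpa [boxProd_adj] using hpq
  · simpa [rowsAt_image_prodMap] using hC.2 j

theorem card_lastColumnFiber_le {B B' : Finset (Fin m)} (h : #B = #B') :
    #(lastColumnFiber m n B) ≤ #(lastColumnFiber m n B') := by
  obtain ⟨σ, rfl⟩ := Equiv.Perm.exists_map_finset_eq B B' h
  refine card_le_card_of_injOn (fun C => C.image (Prod.map σ id)) (fun C hC => ?_)
    (image_injective (f := Prod.map σ id) fun p q h => by
      simpa [Prod.ext_iff] using h).injOn
  simp only [lastColumnFiber, coe_filter, mem_univ, true_and, Set.mem_ofPred_eq] at hC ⊢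
  exact ⟨image_prodMap_mem_Cmn σ hC.1, by rw [rowsAt_image_prodMap, hC.2]⟩

theorem card_lastColumnFiber (hn : 0 < n + 1) (B : Finset (Fin m)) :
    #(lastColumnFiber m n B) = fval m (n + 1) hn #B := by
  have hB : #({a | (a : ℕ) < #B} : Finset (Fin m)) = #B := by
    rw [Fin.card_filter_val_lt, min_eq_right (card_le_univ B |>.trans_eq (Fintype.card_fin m))]
  rw [fval_succ_eq_card]
  exact le_antisymm (card_lastColumnFiber_le hB.symm) (card_lastColumnFiber_le hB)

section Columns

def appendColumn (C : Finset (Fin m × Fin n)) (B : Finset (Fin m)) :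
    Finset (Fin m × Fin (n + 1)) :=
  C.image (Prod.map id Fin.castSucc) ∪ B.image (·, Fin.last n)

def dropLastColumn (C : Finset (Fin m × Fin (n + 1))) : Finset (Fin m × Fin n) :=
  {p | (p.1, p.2.castSucc) ∈ C}

variable {C : Finset (Fin m × Fin n)} {B : Finset (Fin m)} {a : Fin m}

@[simp]
theorem mem_appendColumn_castSucc {j : Fin n} :
    (a, j.castSucc) ∈ appendColumn C B ↔ (a, j) ∈ C := by
  simp [appendColumn, eq_comm (a := Fin.last n), Fin.castSucc_ne_last]

@[simp]
theorem mem_appendColumn_last : (a, Fin.last n) ∈ appendColumn C B ↔ a ∈ B := by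
  simp [appendColumn]

@[simp]
theorem mem_dropLastColumn {D : Finset (Fin m × Fin (n + 1))} {p : Fin m × Fin n} :
    p ∈ dropLastColumn D ↔ (p.1, p.2.castSucc) ∈ D := by
  simp [dropLastColumn]

theorem rowsAt_appendColumn_castSucc (j : Fin n) :
    rowsAt (appendColumn C B) j.castSucc = rowsAt C j := by
  ext; simp

theorem rowsAt_appendColumn_last : rowsAt (appendColumn C B) (Fin.last n) = B := by
  ext; simp

theorem dropLastColumn_appendColumn : dropLastColumn (appendColumn C B) = C := by
  ext; simp

theorem appendColumn_dropLastColumn (D : Finset (Fin m × Fin (n + 1))) :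
    appendColumn (dropLastColumn D) (rowsAt D (Fin.last n)) = D := by
  ext ⟨a, j⟩
  induction j using Fin.lastCases <;> simp

end Columns

theorem IsConnSet.appendColumn {C : Finset (Fin m × Fin (n + 1))} {B : Finset (Fin m)}
    (hC : IsConnSet (cliquePath m (n + 1)) C) {a : Fin m} (haB : a ∈ B)
    (haC : (a, Fin.last n) ∈ C) : IsConnSet (cliquePath m (n + 2)) (_root_.appendColumn C B) := by
  refine (hC.image _ fun p _ q _ hpq => .inr ?_).union (isConnSet_image_column ⟨a, haB⟩ _)
    (mem_image_of_mem _ haC) (mem_image_of_mem _ haB) ?_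
  · exact cliquePath_adj_castSucc.2 hpq
  · exact (cliquePath_adj_last_castSucc.2 ⟨rfl, rfl⟩).symm

theorem IsConnSet.dropLastColumn {C : Finset (Fin m × Fin (n + 2))}
    (hC : IsConnSet (cliquePath m (n + 2)) C) {b : Fin m} (hb : (b, (Fin.last n).castSucc) ∈ C) :
    IsConnSet (cliquePath m (n + 1)) (_root_.dropLastColumn C) := by
  let g : Fin m × Fin (n + 2) → Fin m × Fin (n + 1) :=
    fun p => Fin.lastCases (b, Fin.last n) (fun j => (p.1, j)) p.2
  have himage : C.image g = _root_.dropLastColumn C := by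
    ext ⟨a, j⟩
    simp only [mem_image, mem_dropLastColumn, Prod.exists]
    constructor
    · rintro ⟨c, k, hck, hg⟩
      induction k using Fin.lastCases with
      | last => simp_all [g]
      | cast k => simp_all [g]
    · exact fun h => ⟨a, j.castSucc, h, by simp [g]⟩
  rw [← himage]
  refine hC.image g fun ⟨c, k⟩ _ ⟨d, l⟩ _ hadj => ?_
  induction k using Fin.lastCases with
  | last =>
    induction l using Fin.lastCases with
    | last => exact .inl (by simp [g])
    | cast l =>
      obtain ⟨rfl, rfl⟩ := cliquePath_adj_last_castSucc.1 hadj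
      simpa [g, boxProd_adj] using em _
  | cast k =>
    induction l using Fin.lastCases with
    | last =>
      obtain ⟨rfl, rfl⟩ := cliquePath_adj_last_castSucc.1 hadj.symm
      simpa [g, boxProd_adj, eq_comm] using em _
    | cast l => exact .inr (by simpa [g] using cliquePath_adj_castSucc.1 hadj)

theorem IsConnSet.exists_mem_last_of_mem_castSucc {C : Finset (Fin m × Fin (n + 2))}
    (hC : IsConnSet (cliquePath m (n + 2)) C) {a b : Fin m} {j : Fin (n + 1)}
    (ha : (a, Fin.last (n + 1)) ∈ C) (hb : (b, j.castSucc) ∈ C) :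
    ∃ c, (c, Fin.last (n + 1)) ∈ C ∧ (c, (Fin.last n).castSucc) ∈ C := by
  obtain ⟨⟨c, k⟩, hu, ⟨d, l⟩, hv, rfl : k = _, hl, hadj⟩ :=
    hC.exists_adj_boundary {p | p.2 = Fin.last (n + 1)} ha rfl hb (Fin.castSucc_ne_last j)
  obtain ⟨l, rfl⟩ := Fin.exists_castSucc_eq.2 hl
  obtain ⟨rfl, rfl⟩ := cliquePath_adj_last_castSucc.1 hadj
  exact ⟨c, hu, hv⟩

theorem appendColumn_mem_Cmn_iff {C : Finset (Fin m × Fin (n + 1))} {B : Finset (Fin m)} :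
    appendColumn C B ∈ Cmn m (n + 2) ↔
      C ∈ Cmn m (n + 1) ∧ ∃ a ∈ B, (a, Fin.last n) ∈ C := by
  simp only [mem_Cmn_iff, Fin.forall_fin_succ' (n := n + 1), rowsAt_appendColumn_castSucc,
    rowsAt_appendColumn_last]
  constructor
  · rintro ⟨hconn, hcols, ⟨a, ha⟩⟩
    obtain ⟨b, hb⟩ := hcols (Fin.last n)
    have ha' : (a, Fin.last (n + 1)) ∈ appendColumn C B := mem_appendColumn_last.2 ha
    have hb' : (b, (Fin.last n).castSucc) ∈ appendColumn C B :=
      mem_appendColumn_castSucc.2 (mem_rowsAt.1 hb)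
    obtain ⟨c, hcB, hcC⟩ := hconn.exists_mem_last_of_mem_castSucc ha' hb'
    refine ⟨⟨?_, hcols⟩, c, mem_appendColumn_last.1 hcB, mem_appendColumn_castSucc.1 hcC⟩
    simpa only [dropLastColumn_appendColumn] using hconn.dropLastColumn hb'
  · rintro ⟨⟨hconn, hcols⟩, a, haB, haC⟩
    exact ⟨hconn.appendColumn haB haC, hcols, a, haB⟩

theorem card_lastColumnFiber_succ (B : Finset (Fin m)) :
    #(lastColumnFiber m (n + 1) B) =
      #({C | C ∈ Cmn m (n + 1) ∧ ∃ a ∈ B, (a, Fin.last n) ∈ C} : Finset _) := by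
  refine card_nbij' dropLastColumn (appendColumn · B) (fun C hC => ?_) (fun C hC => ?_)
    (fun C hC => ?_) (fun C _ => dropLastColumn_appendColumn)
  · simp only [lastColumnFiber, coe_filter, mem_univ, true_and, Set.mem_ofPred_eq] at hC ⊢
    obtain ⟨hC, rfl⟩ := hC
    rwa [← appendColumn_mem_Cmn_iff, appendColumn_dropLastColumn]
  · simp only [lastColumnFiber, coe_filter, mem_univ, true_and, Set.mem_ofPred_eq] at hC ⊢
    exact ⟨appendColumn_mem_Cmn_iff.2 hC, rowsAt_appendColumn_last⟩
  · simp only [lastColumnFiber, coe_filter, mem_univ, true_and, Set.mem_ofPred_eq] at hC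
    exact hC.2 ▸ appendColumn_dropLastColumn C

theorem fval_succ_zero (hn : 0 < n + 1) : fval m (n + 1) hn 0 = 0 := by
  simpa [lastColumnFiber_empty] using (card_lastColumnFiber hn (∅ : Finset (Fin m))).symm

theorem ncard_Cmn_eq_add_sum (A : Finset (Fin m)) :
    (Cmn m (n + 1)).ncard =
      #({C | C ∈ Cmn m (n + 1) ∧ ∃ a ∈ A, (a, Fin.last n) ∈ C} : Finset _) +
        ∑ B ∈ Aᶜ.powerset, #(lastColumnFiber m n B) := by
  have hcard : (Cmn m (n + 1)).ncard = #({C | C ∈ Cmn m (n + 1)} : Finset _) := by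
    rw [← Set.ncard_coe_finset]
    simp
  rw [hcard, ← card_filter_add_card_filter_not (fun C => ∃ a ∈ A, (a, Fin.last n) ∈ C),
    filter_filter, filter_filter]
  congr 1
  have hmiss (C : Finset (Fin m × Fin (n + 1))) :
      (¬∃ a ∈ A, (a, Fin.last n) ∈ C) ↔ rowsAt C (Fin.last n) ⊆ Aᶜ := by
    simp only [subset_iff, mem_rowsAt, mem_compl, not_exists, not_and]
    exact ⟨fun h a haC haA => h a haA haC, fun h a haA haC => h haC haA⟩
  rw [card_eq_sum_card_fiberwise (f := fun C => rowsAt C (Fin.last n)) (t := Aᶜ.powerset)]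
  · refine sum_congr rfl fun B hB => ?_
    simp only [lastColumnFiber, filter_filter]
    congr 1
    ext C
    simp only [mem_filter, mem_univ, true_and, hmiss]
    constructor
    · rintro ⟨⟨hC, -⟩, rfl⟩
      exact ⟨hC, rfl⟩
    · rintro ⟨hC, rfl⟩
      exact ⟨⟨hC, mem_powerset.1 hB⟩, rfl⟩
  · intro C hC
    simp only [coe_filter, mem_univ, true_and, Set.mem_ofPred_eq, hmiss] at hC
    exact mem_powerset.2 hC.2

theorem fval_add_sum_eq_ncard (m n i : ℕ) :
    fval m (n + 2) (by omega) i +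
        ∑ j ∈ Icc 1 (m - i), (m - i).choose j * fval m (n + 1) (by omega) j =
      (Cmn m (n + 1)).ncard := by
  set A : Finset (Fin m) := {a | (a : ℕ) < i}
  have hA : #Aᶜ = m - i := by
    rw [card_compl, Fin.card_filter_val_lt, Fintype.card_fin]
    omega
  rw [ncard_Cmn_eq_add_sum A, fval_succ_eq_card, card_lastColumnFiber_succ]
  congr 1
  calc ∑ j ∈ Icc 1 (m - i), (m - i).choose j * fval m (n + 1) (by omega) j
      = ∑ j ∈ range (m - i + 1), (m - i).choose j * fval m (n + 1) (by omega) j := by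
        rw [range_eq_Ico, sum_eq_sum_Ico_succ_bot (Nat.succ_pos _), fval_succ_zero, mul_zero,
          zero_add, zero_add, Nat.succ_eq_add_one, Ico_add_one_right_eq_Icc]
    _ = ∑ B ∈ Aᶜ.powerset, fval m (n + 1) (by omega) #B := by
        simp only [sum_powerset_apply_card, hA, smul_eq_mul]
    _ = ∑ B ∈ Aᶜ.powerset, #(lastColumnFiber m n B) :=
        sum_congr rfl fun B _ => (card_lastColumnFiber _ B).symm

end Grid

/-- For any `m ≥ 1` and `1 ≤ i ≤ m`: `f_{m,1}^i = 1`, and for every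
`n ≥ 2`, `f_{m,n}^i = |C_{m,n−1}| − Σ_{j=1}^{m−i} C(m−i,j)·f_{m,n−1}^j`. -/
theorem statement9 (m i : ℕ) (hm : 0 < m) (hi : 1 ≤ i) :
    fval m 1 one_pos i = 1 ∧
    ∀ n : ℕ, (hn : 2 ≤ n) →
      (fval m n (by omega) i : ℤ) =
        ((Cmn m (n - 1)).ncard : ℤ) -
          ∑ j ∈ Finset.Icc 1 (m - i),
            (Nat.choose (m - i) j : ℤ) * (fval m (n - 1) (by omega) j : ℤ) := by
  refine ⟨?_, fun n hn => ?_⟩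
  · have hA : ({a | (a : ℕ) < i} : Finset (Fin m)).Nonempty :=
      ⟨⟨0, hm⟩, by simpa using Nat.lt_of_succ_le hi⟩
    rw [fval_succ_eq_card, lastColumnFiber_zero hA, card_singleton]
  · obtain ⟨n, rfl⟩ := Nat.exists_eq_add_of_le' hn
    rw [eq_sub_iff_add_eq]
    exact_mod_cast fval_add_sum_eq_ncard m n i
end
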